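/- arXiv:1604.03581 — 6 statements merged into one kernel-verified Lean document; each statement's English description precedes it below -/
import Mathlib

section
/- Let G be a finite group of order e acting faithfully on a field K by automorphisms with fixed field C = K^G, and suppose [K : C] = e. If K ⊆ K' is an extension of fields with a G-action extending the one on K, and C' = (K')^G, then K and C' are linearly disjoint over C; in particular, any C-basis of K remains C'-linearly independent in K'. -/
/-!
By Artin's lemma, a family in a field `F` is linearly independent over the fixed field of `G`
exactly when its orbit vectors `g ↦ g • x` in `G → F` are linearly independent over `F`.
Equivariance makes the orbit vectors of the image in `K'` of a family in `K` the images of its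
orbit vectors in `G → K`, and linear independence of vectors in `G → K` with `G` finite survives
extending scalars from `K` to `K'`.
-/

namespace FixedPoints

theorem linearIndependent_toFun_iff (G : Type*) [Group G] {F : Type*} [Field F]
    [MulSemiringAction G F] {ι : Type*} {v : ι → F} :
    LinearIndependent F (fun i => MulAction.toFun G F (v i)) ↔
      LinearIndependent (subfield G F) v := by
  constructor
  · intro h
    exact (h.restrict_scalars' (subfield G F)).of_comp
      (LinearMap.pi fun g => (MulSemiringAction.toAlgHom (subfield G F) F g).toLinearMap)
  · intro hv
    have hrange : LinearIndepOn F (MulAction.toFun G F) (Set.range v) := by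
      refine linearIndepOn_of_finite _ fun t ht htfin => ?_
      lift t to Finset F using htfin
      exact linearIndependent_smul_of_linearIndependent G F (hv.linearIndepOn_id.mono ht)
    exact (linearIndepOn_range_iff hv.injective _).mp hrange

end FixedPoints

theorem fixed_field_linear_disjoint_general
    (K K' : Type*) [Field K] [Field K'] [Algebra K K']
    (G : Type*) [Group G] [Finite G]
    [MulSemiringAction G K] [MulSemiringAction G K']
    (hcompat : ∀ (g : G) (x : K), g • (algebraMap K K' x) = algebraMap K K' (g • x))
    {ι : Type*} (v : ι → K)
    (hv : LinearIndependent (FixedPoints.subfield G K) v) :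
    LinearIndependent (FixedPoints.subfield G K') (fun i => algebraMap K K' (v i)) := by
  have orbit_map : ∀ i, MulAction.toFun G K' (algebraMap K K' (v i)) =
      algebraMap K K' ∘ MulAction.toFun G K (v i) := fun i => funext fun g => hcompat g (v i)
  rw [← FixedPoints.linearIndependent_toFun_iff, funext orbit_map]
  exact linearIndependent_algebraMap_comp_iff.mpr
    ((FixedPoints.linearIndependent_toFun_iff G).mpr hv)

/-- Let G be a finite group of order e acting faithfully on a field K
with fixed field C = K^G and [K : C] = e. If K ⊆ K' is a G-equivariant field
extension and C' = (K')^G, then K and C' are linearly disjoint over C: any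
C-linearly independent family in K remains C'-linearly independent in K'. -/
theorem fixed_field_linear_disjoint
    (K K' : Type*) [Field K] [Field K'] [Algebra K K']
    (G : Type*) [Group G] [Finite G]
    [MulSemiringAction G K] [MulSemiringAction G K'] [FaithfulSMul G K]
    (hcompat : ∀ (g : G) (x : K), g • (algebraMap K K' x) = algebraMap K K' (g • x))
    (hstrict : Module.finrank (FixedPoints.subfield G K) K = Nat.card G)
    {ι : Type*} (v : ι → K)
    (hv : LinearIndependent (FixedPoints.subfield G K) v) :
    LinearIndependent (FixedPoints.subfield G K') (fun i => algebraMap K K' (v i)) :=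
  fixed_field_linear_disjoint_general K K' G hcompat v hv
end

section
/- Let C be a perfect field, C^alg its algebraic closure, 𝒢 = Gal(C^alg/C), and 𝒩 a closed normal subgroup of 𝒢 with 𝒢/𝒩 ≅ G finite. Let K = (C^alg)^𝒩. Then the following are equivalent: (1) there is a nontrivial algebraic field extension K ⊆ K' to which the G-action on K extends; (2) there is a proper closed subgroup 𝒢₀ < 𝒢 with 𝒢₀𝒩 = 𝒢. -/
/-!
Both directions run through the Galois correspondence for closed subgroups of `𝒢`.
Given a proper closed supplement `𝒢₀` of `𝒩`, take `K' = (C^alg)^(𝒢₀ ∩ 𝒩) ⊋ K`: the group `𝒢₀`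
normalises `𝒢₀ ∩ 𝒩`, so it acts on `K'` by restriction, and this action factors through
`𝒢₀ / (𝒢₀ ∩ 𝒩) ≅ 𝒢 / 𝒩`. Conversely, given an action `ρ` of `𝒢 / 𝒩` on some `K' ⊋ K` extending
the one on `K`, the automorphisms `σ` with `σ|K' = ρ(σ𝒩)` form a subgroup `𝒢₀`. It is closed
because `𝒩` is open, proper because `𝒩` does not fix `K'`, and it supplements `𝒩` because every
extension of `ρ(σ𝒩)` to `C^alg` agrees with `σ` on `K`, hence lies in `σ𝒩`.
-/

open IntermediateField

open scoped Pointwise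

namespace QuotientGroup

variable {G M : Type*} [Group G] [Group M] {H N : Subgroup G} [N.Normal]

theorem exists_mem_mk_eq_of_sup_eq_top (hHN : H ⊔ N = ⊤) (q : G ⧸ N) :
    ∃ h ∈ H, (h : G ⧸ N) = q := by
  obtain ⟨g, rfl⟩ := mk_surjective q
  have hg : g ∈ (H : Set G) * (N : Set G) := by rw [← Subgroup.mul_normal, hHN]; trivial
  obtain ⟨h, hh, n, hn, rfl⟩ := hg
  exact ⟨h, hh, QuotientGroup.eq.mpr (by simpa using hn)⟩

theorem exists_lift_of_sup_eq_top (hHN : H ⊔ N = ⊤) (f : H →* M)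
    (hf : ∀ h : H, (h : G) ∈ N → f h = 1) : ∃ F : G ⧸ N →* M, ∀ h : H, F h = f h := by
  let π : H →* G ⧸ N := (mk' N).comp H.subtype
  have hπ : Function.Surjective π := fun q => by
    obtain ⟨h, hh, rfl⟩ := exists_mem_mk_eq_of_sup_eq_top hHN q
    exact ⟨⟨h, hh⟩, rfl⟩
  have hker : π.ker ≤ f.ker := fun h hh => hf h ((eq_one_iff _).mp hh)
  exact ⟨π.liftOfSurjective hπ ⟨f, hker⟩, π.liftOfRightInverse_comp_apply _ _ ⟨f, hker⟩⟩

end QuotientGroup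

namespace IntermediateField

variable {k K : Type*} [Field k] [Field K] [Algebra k K]

def restrictHom (E : IntermediateField k K) (G₀ : Subgroup Gal(K/k))
    (hE : ∀ g ∈ G₀, ∀ x ∈ E, g x ∈ E) : G₀ →* Gal(E/k) where
  toFun g :=
    { toFun x := ⟨(g : Gal(K/k)) x, hE g g.2 x x.2⟩
      invFun x := ⟨(g⁻¹ : Gal(K/k)) x, hE _ (inv_mem g.2) x x.2⟩
      left_inv x := Subtype.ext (g.1.symm_apply_apply (x : K))
      right_inv x := Subtype.ext (g.1.apply_symm_apply (x : K))
      map_mul' x y := Subtype.ext (map_mul g.1 (x : K) y)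
      map_add' x y := Subtype.ext (map_add g.1 (x : K) y)
      commutes' c := Subtype.ext (g.1.commutes c) }
  map_one' := rfl
  map_mul' _ _ := rfl

@[simp]
theorem restrictHom_apply_coe (E : IntermediateField k K) (G₀ : Subgroup Gal(K/k))
    (hE : ∀ g ∈ G₀, ∀ x ∈ E, g x ∈ E) (g : G₀) (x : E) :
    (restrictHom E G₀ hE g x : K) = (g : Gal(K/k)) x := rfl

theorem apply_mem_fixedField_of_mem_normalizer {H : Subgroup Gal(K/k)} {g : Gal(K/k)}
    (hg : g ∈ Subgroup.normalizer (H : Set Gal(K/k))) {x : K} (hx : x ∈ fixedField H) :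
    g x ∈ fixedField H := by
  rw [mem_fixedField_iff] at hx ⊢
  intro h hh
  have hconj : g⁻¹ * h * g⁻¹⁻¹ ∈ H := (Subgroup.mem_normalizer_iff.mp (inv_mem hg) h).mp hh
  simpa [AlgEquiv.mul_apply, eq_comm (a := x), AlgEquiv.symm_apply_eq] using hx _ hconj

theorem mk_eq_mk_iff_eqOn_fixedField [IsGalois k K] {N : Subgroup Gal(K/k)}
    (hN : IsClosed (N : Set Gal(K/k))) {σ τ : Gal(K/k)} :
    (σ : Gal(K/k) ⧸ N) = τ ↔ ∀ x ∈ fixedField N, σ x = τ x := by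
  have hfix : (fixedField N).fixingSubgroup = N :=
    InfiniteGalois.fixingSubgroup_fixedField ⟨N, hN⟩
  conv_lhs => rw [QuotientGroup.eq, ← hfix, mem_fixingSubgroup_iff]
  refine forall₂_congr fun x _ => ?_
  rw [AlgEquiv.mul_apply, AlgEquiv.aut_inv, AlgEquiv.symm_apply_eq, eq_comm]

theorem fixedField_lt_fixedField [IsGalois k K] {H N : Subgroup Gal(K/k)}
    (hH : IsClosed (H : Set Gal(K/k))) (hN : IsClosed (N : Set Gal(K/k))) (hHN : H < N) :
    fixedField N < fixedField H := by
  refine lt_of_le_of_ne (fixedField_le hHN.le) fun heq => hHN.ne ?_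
  simpa [InfiniteGalois.fixingSubgroup_fixedField ⟨H, hH⟩,
    InfiniteGalois.fixingSubgroup_fixedField ⟨N, hN⟩] using congrArg fixingSubgroup heq.symm

theorem exists_extension_of_sup_eq_top [IsGalois k K] {N G₀ : Subgroup Gal(K/k)} [N.Normal]
    (hN : IsClosed (N : Set Gal(K/k))) (hG₀ : IsClosed (G₀ : Set Gal(K/k))) (hne : G₀ ≠ ⊤)
    (hsup : G₀ ⊔ N = ⊤) :
    ∃ K' : IntermediateField k K, fixedField N < K' ∧ ∃ ρ : Gal(K/k) ⧸ N →* Gal(K'/k),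
      ∀ (σ : Gal(K/k)) (x : K'), (x : K) ∈ fixedField N → (ρ σ x : K) = σ x := by
  have hlt : G₀ ⊓ N < N := inf_lt_right.mpr fun hle => hne (by rwa [sup_eq_left.mpr hle] at hsup)
  have hnorm : G₀ ≤ Subgroup.normalizer ((G₀ ⊓ N : Subgroup Gal(K/k)) : Set Gal(K/k)) :=
    le_trans (le_inf Subgroup.le_normalizer Subgroup.le_normalizer_of_normal)
      Subgroup.inf_normalizer_le_normalizer_inf
  have hstable (g) (hg : g ∈ G₀) (x) (hx : x ∈ fixedField (G₀ ⊓ N)) :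
      g x ∈ fixedField (G₀ ⊓ N) :=
    apply_mem_fixedField_of_mem_normalizer (hnorm hg) hx
  obtain ⟨ρ, hρ⟩ := QuotientGroup.exists_lift_of_sup_eq_top hsup (restrictHom _ G₀ hstable)
    fun g hg => AlgEquiv.ext fun x => Subtype.ext ((mem_fixedField_iff _ _).mp x.2 g ⟨g.2, hg⟩)
  refine ⟨_, fixedField_lt_fixedField (hG₀.inter hN) hN hlt, ρ, fun σ x hx => ?_⟩
  obtain ⟨g, hg, hgσ⟩ := QuotientGroup.exists_mem_mk_eq_of_sup_eq_top hsup (σ : Gal(K/k) ⧸ N)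
  rw [← hgσ, hρ ⟨g, hg⟩, restrictHom_apply_coe]
  exact (mk_eq_mk_iff_eqOn_fixedField hN).mp hgσ x hx

theorem isLocallyConstant_apply [Algebra.IsIntegral k K] (x : K) :
    IsLocallyConstant fun σ : Gal(K/k) => σ x := by
  refine IsLocallyConstant.iff_isOpen_fiber_apply.mpr fun σ => ?_
  convert (stabilizer_isOpen_of_isIntegral (K := k) x).preimage (continuous_const_mul σ⁻¹) using 1
  ext τ
  simpa [mul_smul, AlgEquiv.aut_inv] using σ.symm_apply_eq.symm

variable {N : Subgroup Gal(K/k)} [N.Normal] {E : IntermediateField k K}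

def liftsSubgroup (ρ : Gal(K/k) ⧸ N →* Gal(E/k)) : Subgroup Gal(K/k) where
  carrier := {σ | ∀ x : E, σ x = ρ σ x}
  one_mem' x := by simp
  mul_mem' {a b} ha hb x := by
    rw [AlgEquiv.mul_apply, hb, ha, QuotientGroup.mk_mul, map_mul, AlgEquiv.mul_apply]
  inv_mem' {a} ha x := by
    rw [QuotientGroup.mk_inv, map_inv, AlgEquiv.aut_inv, AlgEquiv.aut_inv,
      AlgEquiv.symm_apply_eq, ha, AlgEquiv.apply_symm_apply]

theorem mem_liftsSubgroup {ρ : Gal(K/k) ⧸ N →* Gal(E/k)} {σ : Gal(K/k)} :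
    σ ∈ liftsSubgroup ρ ↔ ∀ x : E, σ x = ρ σ x := Iff.rfl

theorem isClosed_liftsSubgroup [Algebra.IsIntegral k K] (hN : IsOpen (N : Set Gal(K/k)))
    (ρ : Gal(K/k) ⧸ N →* Gal(E/k)) : IsClosed (liftsSubgroup ρ : Set Gal(K/k)) := by
  have : DiscreteTopology (Gal(K/k) ⧸ N) := QuotientGroup.discreteTopology hN
  have hmk : IsLocallyConstant (QuotientGroup.mk : Gal(K/k) → Gal(K/k) ⧸ N) :=
    (IsLocallyConstant.iff_continuous _).mpr QuotientGroup.continuous_mk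
  have hclosed (x : E) : IsClosed {σ : Gal(K/k) | σ x = ρ σ x} :=
    isOpen_compl_iff.mp (((isLocallyConstant_apply (x : K)).prodMk
      (hmk.comp fun q => (ρ q x : K))) {p | p.1 = p.2}ᶜ)
  simpa only [liftsSubgroup, Subgroup.coe_set_mk, Submonoid.coe_set_mk, Subsemigroup.coe_set_mk,
    Set.ofPred_forall] using isClosed_iInter hclosed

theorem liftsSubgroup_ne_top (hE : fixedField N < E) (ρ : Gal(K/k) ⧸ N →* Gal(E/k)) :
    liftsSubgroup ρ ≠ ⊤ := by
  intro htop
  refine hE.not_ge fun x hx => (mem_fixedField_iff _ _).mpr fun n hn => ?_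
  have := mem_liftsSubgroup.mp (htop ▸ Subgroup.mem_top n) ⟨x, hx⟩
  rwa [(QuotientGroup.eq_one_iff n).mpr hn, map_one, AlgEquiv.one_apply] at this

theorem liftsSubgroup_sup_eq_top [IsGalois k K] (hN : IsClosed (N : Set Gal(K/k)))
    (hE : fixedField N ≤ E) {ρ : Gal(K/k) ⧸ N →* Gal(E/k)}
    (hρ : ∀ (σ : Gal(K/k)) (x : E), (x : K) ∈ fixedField N → (ρ σ x : K) = σ x) :
    liftsSubgroup ρ ⊔ N = ⊤ := by
  refine eq_top_iff.mpr fun σ _ => ?_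
  let τ : Gal(K/k) := (ρ σ).liftNormal K
  have hτ (x : E) : τ x = ρ σ x := AlgEquiv.liftNormal_commutes (ρ σ) K x
  have hτσ : (τ : Gal(K/k) ⧸ N) = σ := (mk_eq_mk_iff_eqOn_fixedField hN).mpr fun x hx => by
    rw [← hρ σ ⟨x, hE hx⟩ hx, ← hτ]
  have hτmem : τ ∈ liftsSubgroup ρ := fun x => by rw [hτσ]; exact hτ x
  simpa using mul_mem (Subgroup.mem_sup_left hτmem)
    (Subgroup.mem_sup_right (QuotientGroup.eq.mp hτσ))

end IntermediateField

/-- Let C be a perfect field, 𝒢 = Gal(C^alg/C), 𝒩 a closed normal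
subgroup of 𝒢 of finite index (so 𝒢/𝒩 ≅ G finite) and K = (C^alg)^𝒩 with its
natural G = 𝒢/𝒩 action. The following are equivalent: (1) there is a nontrivial
algebraic extension K ⊆ K' to which the G-action extends; (2) there is a proper
closed subgroup 𝒢₀ < 𝒢 with 𝒢₀𝒩 = 𝒢. -/
theorem extension_of_action_iff_proper_closed_supplement
    (C : Type*) [Field C] [PerfectField C]
    (𝒩 : Subgroup (AlgebraicClosure C ≃ₐ[C] AlgebraicClosure C))
    [𝒩.Normal] (hclosed : IsClosed (𝒩 : Set (AlgebraicClosure C ≃ₐ[C] AlgebraicClosure C)))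
    (hfin : Finite ((AlgebraicClosure C ≃ₐ[C] AlgebraicClosure C) ⧸ 𝒩)) :
    (∃ K' : IntermediateField C (AlgebraicClosure C),
        IntermediateField.fixedField 𝒩 < K' ∧
        ∃ ρ : ((AlgebraicClosure C ≃ₐ[C] AlgebraicClosure C) ⧸ 𝒩) →* (K' ≃ₐ[C] K'),
          ∀ (σ : AlgebraicClosure C ≃ₐ[C] AlgebraicClosure C) (x : K'),
            (x : AlgebraicClosure C) ∈ IntermediateField.fixedField 𝒩 →
            ((ρ (QuotientGroup.mk σ) x : K') : AlgebraicClosure C) = σ (x : AlgebraicClosure C))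
      ↔
    (∃ 𝒢₀ : Subgroup (AlgebraicClosure C ≃ₐ[C] AlgebraicClosure C),
        IsClosed (𝒢₀ : Set (AlgebraicClosure C ≃ₐ[C] AlgebraicClosure C)) ∧ 𝒢₀ ≠ ⊤ ∧
        𝒢₀ ⊔ 𝒩 = ⊤) := by
  have : 𝒩.FiniteIndex := Subgroup.finiteIndex_of_finite_quotient
  have hopen : IsOpen (𝒩 : Set (AlgebraicClosure C ≃ₐ[C] AlgebraicClosure C)) :=
    𝒩.isOpen_of_isClosed_of_finiteIndex hclosed
  constructor
  · rintro ⟨K', hK', ρ, hρ⟩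
    exact ⟨liftsSubgroup ρ, isClosed_liftsSubgroup hopen ρ, liftsSubgroup_ne_top hK' ρ,
      liftsSubgroup_sup_eq_top hclosed hK'.le hρ⟩
  · rintro ⟨𝒢₀, h𝒢₀, hne, hsup⟩
    exact exists_extension_of_sup_eq_top hclosed h𝒢₀ hne hsup
end

section
/- Let C ⊆ K be a finite Galois extension of degree e, and suppose C is K-strongly PAC. Then C has no finite field extension of degree relatively prime to e (other than C itself). -/
/-- A field `C` (inside `K`) is `K`-strongly PAC if every affine `C`-variety which is
irreducible over `K` (i.e. whose defining ideal generates a prime ideal of the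
polynomial ring over `K`) has a `C`-rational point. -/
def KStronglyPAC (C K : Type*) [Field C] [Field K] [Algebra C K] : Prop :=
  ∀ (n : ℕ) (J : Ideal (MvPolynomial (Fin n) C)),
    (J.map (MvPolynomial.map (algebraMap C K))).IsPrime →
      ∃ x : Fin n → C, ∀ f ∈ J, MvPolynomial.eval x f = 0

open Polynomial IntermediateField

/-- Key algebraic step: a monic polynomial irreducible over `C` of degree coprime to
`[K : C]` remains irreducible over `K`. -/
theorem irreducible_map_of_coprime_finrank
    {C K : Type*} [Field C] [Field K] [Algebra C K] [FiniteDimensional C K]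
    {f : C[X]} (hm : f.Monic) (hf : Irreducible f)
    (hcop : Nat.Coprime f.natDegree (Module.finrank C K)) :
    Irreducible (f.map (algebraMap C K)) := by
  set fK : K[X] := f.map (algebraMap C K) with hfK
  have hfK0 : fK ≠ 0 := (hm.map _).ne_zero
  have hdeg : fK.natDegree = f.natDegree := natDegree_map _
  have hdpos : 0 < f.natDegree := hf.natDegree_pos
  have hfKnu : ¬ IsUnit fK := not_isUnit_of_natDegree_pos _ (by omega)
  obtain ⟨g₀, hg₀irr, hg₀dvd⟩ := WfDvdMonoid.exists_irreducible_factor hfKnu hfK0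
  have hg₀0 : g₀ ≠ 0 := hg₀irr.ne_zero
  set g : K[X] := g₀ * Polynomial.C (g₀.leadingCoeff)⁻¹ with hgdef
  have hassoc : Associated g₀ g :=
    associated_mul_unit_right _ _ (isUnit_C.mpr (isUnit_iff_ne_zero.mpr
      (inv_ne_zero (leadingCoeff_ne_zero.mpr hg₀0))))
  have hgirr : Irreducible g := hassoc.irreducible hg₀irr
  have hgmonic : g.Monic := monic_mul_leadingCoeff_inv hg₀0
  have hgdvd : g ∣ fK := dvd_trans hassoc.symm.dvd hg₀dvd
  -- pass to the algebraic closure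
  let A := AlgebraicClosure K
  obtain ⟨β, hβ⟩ := IsAlgClosed.exists_root (g.map (algebraMap K A))
    (by rw [degree_map]; intro h
        exact hgirr.natDegree_pos.ne'
          (natDegree_eq_zero_iff_degree_le_zero.mpr h.le))
  have hβg : Polynomial.aeval β g = 0 := by rwa [aeval_def, ← eval_map]
  have hβint : IsIntegral K β := ⟨g, hgmonic, hβg⟩
  have hminK : minpoly K β = g := (minpoly.eq_of_irreducible_of_monic hgirr hβg hgmonic).symm
  -- β is a root of f over C
  have hβf : Polynomial.aeval (R := C) β f = 0 := by
    obtain ⟨q, hq⟩ := hgdvd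
    have : f.map (algebraMap C A) = (g.map (algebraMap K A)) * (q.map (algebraMap K A)) := by
      rw [← Polynomial.map_mul, ← hq, hfK, Polynomial.map_map,
        ← IsScalarTower.algebraMap_eq]
    rw [aeval_def, ← eval_map, this, eval_mul, hβ, zero_mul]
  -- work inside K⟮β⟯
  haveI : FiniteDimensional K K⟮β⟯ := IntermediateField.adjoin.finiteDimensional hβint
  haveI : FiniteDimensional C K⟮β⟯ := FiniteDimensional.trans C K K⟮β⟯
  haveI : IsScalarTower C K⟮β⟯ A := IsScalarTower.of_algebraMap_eq fun x => by
    rw [IsScalarTower.algebraMap_apply C K A, IsScalarTower.algebraMap_apply C K K⟮β⟯,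
      ← IsScalarTower.algebraMap_apply K K⟮β⟯ A]
  set β' : K⟮β⟯ := AdjoinSimple.gen K β with hβ'
  have hβ'f : Polynomial.aeval (R := C) β' f = 0 := by
    have := Polynomial.aeval_algebraMap_apply A β' f
    rw [AdjoinSimple.algebraMap_gen, hβf] at this
    exact (algebraMap K⟮β⟯ A).injective (by simpa using this.symm)
  have hminC : minpoly C β' = f := (minpoly.eq_of_irreducible_of_monic hf hβ'f hm).symm
  have hdvd : f.natDegree ∣ Module.finrank C K⟮β⟯ := by
    have := minpoly.degree_dvd (x := β') (IsIntegral.of_finite C β')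
    rwa [hminC] at this
  have htower : Module.finrank C K⟮β⟯ = Module.finrank C K * Module.finrank K K⟮β⟯ :=
    (Module.finrank_mul_finrank C K K⟮β⟯).symm
  have hrank : Module.finrank K K⟮β⟯ = g.natDegree := by
    rw [IntermediateField.adjoin.finrank hβint, hminK]
  have hdvd2 : f.natDegree ∣ g.natDegree := by
    refine hcop.dvd_of_dvd_mul_right ?_
    rwa [htower, hrank, mul_comm] at hdvd
  have hle : g.natDegree ≤ f.natDegree := by
    rw [← hdeg]; exact natDegree_le_of_dvd hgdvd hfK0
  have hgpos : 0 < g.natDegree := hgirr.natDegree_pos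
  have heq : g.natDegree = f.natDegree := le_antisymm hle (Nat.le_of_dvd hgpos hdvd2)
  obtain ⟨q, hq⟩ := hgdvd
  have hq0 : q ≠ 0 := fun h => hfK0 (by rw [hq, h, mul_zero])
  have hqdeg : q.natDegree = 0 := by
    have := natDegree_mul (hgirr.ne_zero) hq0
    rw [← hq, hdeg, heq] at this
    omega
  have hqunit : IsUnit q := isUnit_iff.mpr ⟨q.coeff 0, isUnit_iff_ne_zero.mpr
    (fun h => hq0 (by rw [eq_C_of_natDegree_eq_zero hqdeg, h, map_zero])),
    (eq_C_of_natDegree_eq_zero hqdeg).symm⟩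
  have hass2 : Associated g fK := hq ▸ associated_mul_unit_right g q hqunit
  exact hass2.irreducible hgirr

/-- The algebra isomorphism between `R[X]` and `MvPolynomial (Fin 1) R`. -/
noncomputable def polyEquivMv (R : Type*) [CommSemiring R] :
    Polynomial R ≃ₐ[R] MvPolynomial (Fin 1) R :=
  AlgEquiv.ofAlgHom (Polynomial.aeval (MvPolynomial.X 0))
    (MvPolynomial.aeval fun _ => Polynomial.X)
    (by ext i : 2
        obtain rfl : i = 0 := Subsingleton.elim i 0
        simp)
    (by ext : 2; simp)

theorem polyEquivMv_apply {R : Type*} [CommSemiring R] (p : Polynomial R) :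
    polyEquivMv R p = Polynomial.aeval (MvPolynomial.X 0) p := rfl

/-- Let C ⊆ K be a finite Galois extension of degree e, with C
K-strongly PAC. Then C has no finite extension of degree coprime to e other than C
itself. -/
theorem no_coprime_degree_extension_of_KStronglyPAC
    (C K : Type*) [Field C] [Field K] [Algebra C K]
    [FiniteDimensional C K] [IsGalois C K]
    (hpac : KStronglyPAC C K) :
    ∀ (L : Type*) [Field L] [Algebra C L] [FiniteDimensional C L],
      Nat.Coprime (Module.finrank C L) (Module.finrank C K) →
        Module.finrank C L = 1 := by
  intro L _ _ _ hcop
  rw [← Subalgebra.bot_eq_top_iff_finrank_eq_one]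
  rw [eq_top_iff]
  intro α _
  -- consider the minimal polynomial of α
  set f : Polynomial C := minpoly C α with hfdef
  have hint : IsIntegral C α := IsIntegral.of_finite C α
  have hm : f.Monic := minpoly.monic hint
  have hf : Irreducible f := minpoly.irreducible hint
  have hdvd : f.natDegree ∣ Module.finrank C L := minpoly.degree_dvd hint
  have hcop' : Nat.Coprime f.natDegree (Module.finrank C K) :=
    Nat.Coprime.coprime_dvd_left hdvd hcop
  have hirrK : Irreducible (f.map (algebraMap C K)) :=
    irreducible_map_of_coprime_finrank hm hf hcop'
  -- the one-dimensional variety defined by f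
  set T : Polynomial C →ₐ[C] MvPolynomial (Fin 1) C := Polynomial.aeval (MvPolynomial.X 0)
  set J : Ideal (MvPolynomial (Fin 1) C) := Ideal.span {T f} with hJdef
  -- the mapped generator
  have hkey : MvPolynomial.map (algebraMap C K) (T f) =
      polyEquivMv K (f.map (algebraMap C K)) := by
    show (MvPolynomial.map (algebraMap C K)) (Polynomial.aeval (MvPolynomial.X 0) f) = _
    rw [polyEquivMv_apply, Polynomial.aeval_def, Polynomial.aeval_def,
      Polynomial.hom_eval₂, Polynomial.eval₂_map, MvPolynomial.map_X]
    congr 1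
    ext a
    simp [MvPolynomial.algebraMap_eq]
  have hprime : (J.map (MvPolynomial.map (algebraMap C K))).IsPrime := by
    rw [hJdef, Ideal.map_span, Set.image_singleton, hkey]
    have hp : Prime (f.map (algebraMap C K)) := hirrK.prime
    have : Ideal.span {(f.map (algebraMap C K))} |>.IsPrime :=
      (Ideal.span_singleton_prime hp.ne_zero).mpr hp
    have := Ideal.map_isPrime_of_equiv (polyEquivMv K).toRingEquiv
      (I := Ideal.span {(f.map (algebraMap C K))})
    rwa [Ideal.map_span, Set.image_singleton] at this
  obtain ⟨x, hx⟩ := hpac 1 J hprime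
  have hroot : f.eval (x 0) = 0 := by
    have h1 : MvPolynomial.eval x (T f) = 0 :=
      hx _ (Ideal.subset_span (Set.mem_singleton _))
    rw [show T f = Polynomial.aeval (MvPolynomial.X 0) f from rfl, Polynomial.aeval_def,
      Polynomial.hom_eval₂, MvPolynomial.eval_X] at h1
    have h2 : (MvPolynomial.eval x).comp (algebraMap C (MvPolynomial (Fin 1) C)) =
        RingHom.id C := by
      ext a
      simp [MvPolynomial.algebraMap_eq]
    rw [h2] at h1; exact h1
  -- f has a root in C, hence has degree 1
  have hdvdX : Polynomial.X - Polynomial.C (x 0) ∣ f := dvd_iff_isRoot.mpr hroot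
  obtain ⟨q, hq⟩ := hdvdX
  have hqunit : IsUnit q :=
    (hf.isUnit_or_isUnit hq).resolve_left (Polynomial.not_isUnit_X_sub_C _)
  have hdeg1 : f.degree = 1 := by
    rw [hq, Polynomial.degree_mul, Polynomial.degree_X_sub_C,
      Polynomial.degree_eq_zero_of_isUnit hqunit, add_zero]
  have : α ∈ (algebraMap C L).range := minpoly.degree_eq_one_iff.mp hdeg1
  rwa [Algebra.mem_bot]
end

section
/- Let C be a perfect field and C ⊆ K a finite Galois extension with group G. If C is K-strongly PAC, then every polynomial f ∈ C[X] that is irreducible over K has degree 1; equivalently, there is no nontrivial algebraic G-equivariant extension of the G-field K: if K ⊂ K' is an algebraic extension with a G-action extending that on K and a ∈ (K')^G \ C, then the minimal polynomial of a over K lies in C[X], is irreducible over K, and has degree > 1. -/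
/-!
If `f ∈ C[X]` is irreducible over `K`, the hypersurface `f = 0` in the affine line is
`K`-irreducible, so strong PACness gives a root of `f` in `C`, and an irreducible polynomial
with a root is linear.

For the second part, each `g ∈ G` maps the minimal polynomial of a `G`-invariant `a` over `K`
to a monic polynomial of the same degree vanishing at `ρ g a = a`, so it fixes it; its
coefficients are then `G`-invariant, hence lie in `C = K^G`. If this polynomial were linear,
`a` would lie in `K`, hence in `K^G = C`.
-/

open Polynomial

section ToMvPolynomial

variable {R S σ : Type*} [CommSemiring R] [CommSemiring S]

theorem Polynomial.map_toMvPolynomial (φ : R →+* S) (i : σ) (p : R[X]) :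
    MvPolynomial.map φ (p.toMvPolynomial i) = (p.map φ).toMvPolynomial i := by
  induction p using Polynomial.induction_on' with
  | add p q hp hq => simp [hp, hq]
  | monomial n r => simp [toMvPolynomial, MvPolynomial.algebraMap_eq]

theorem Polynomial.toMvPolynomial_eq_uniqueAlgEquiv_symm [Unique σ] (p : R[X]) :
    p.toMvPolynomial default = (MvPolynomial.uniqueAlgEquiv R σ).symm p := by
  simp [toMvPolynomial, Polynomial.aeval_def]

theorem Polynomial.irreducible_toMvPolynomial_iff [Unique σ] {p : R[X]} :
    Irreducible (p.toMvPolynomial (default : σ)) ↔ Irreducible p := by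
  rw [toMvPolynomial_eq_uniqueAlgEquiv_symm]
  exact MulEquiv.irreducible_iff (MvPolynomial.uniqueAlgEquiv R σ).symm.toMulEquiv

end ToMvPolynomial

namespace KStronglyPAC

variable {C K : Type*} [Field C] [Field K] [Algebra C K]

theorem exists_isRoot (hpac : KStronglyPAC C K) {f : C[X]}
    (hf : Irreducible (f.map (algebraMap C K))) : ∃ c : C, f.IsRoot c := by
  let F : MvPolynomial (Fin 1) C := f.toMvPolynomial 0
  have hprime : ((Ideal.span {F}).map (MvPolynomial.map (algebraMap C K))).IsPrime := by
    have hirr : Irreducible ((f.map (algebraMap C K)).toMvPolynomial (0 : Fin 1)) :=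
      irreducible_toMvPolynomial_iff.mpr hf
    rw [Ideal.map_span, Set.image_singleton, map_toMvPolynomial,
      Ideal.span_singleton_prime hirr.ne_zero]
    exact hirr.prime
  obtain ⟨x, hx⟩ := hpac 1 _ hprime
  refine ⟨x 0, ?_⟩
  simpa [F, MvPolynomial.eval_toMvPolynomial] using hx F (Ideal.mem_span_singleton_self F)

theorem natDegree_eq_one (hpac : KStronglyPAC C K) {f : C[X]}
    (hf : Irreducible (f.map (algebraMap C K))) : f.natDegree = 1 := by
  obtain ⟨c, hc⟩ := hpac.exists_isRoot hf
  have hroot : (f.map (algebraMap C K)).IsRoot (algebraMap C K c) := by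
    simp [IsRoot, eval_map_algebraMap, hc.eq_zero]
  rw [← natDegree_map (algebraMap C K)]
  exact natDegree_eq_of_degree_eq_some (degree_eq_one_of_irreducible_of_root hf hroot)

end KStronglyPAC

section Equivariant

variable {C K K' : Type*} [Field C] [Field K] [Field K'] [Algebra K K']

theorem minpoly_map_eq_of_apply_eq (τ : K ≃+* K) (σ : K' ≃+* K')
    (hστ : ∀ x, σ (algebraMap K K' x) = algebraMap K K' (τ x)) {a : K'} (ha : IsIntegral K a)
    (hσa : σ a = a) : (minpoly K a).map (τ : K →+* K) = minpoly K a := by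
  have hcomp : (σ : K' →+* K').comp (algebraMap K K') = (algebraMap K K').comp τ :=
    RingHom.ext hστ
  have hroot : aeval a ((minpoly K a).map (τ : K →+* K)) = 0 :=
    calc aeval a ((minpoly K a).map (τ : K →+* K))
        = eval₂ ((σ : K' →+* K').comp (algebraMap K K')) (σ a) (minpoly K a) := by
          rw [aeval_def, eval₂_map, hcomp, hσa]
      _ = σ (aeval a (minpoly K a)) := (hom_eval₂ ..).symm
      _ = 0 := by rw [minpoly.aeval, map_zero]
  refine minpoly.unique K a ((minpoly.monic ha).map _) hroot fun q hq hqa ↦ ?_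
  rw [degree_map]
  exact minpoly.min K a hq hqa

variable [Algebra C K] [IsGalois C K] (ρ : Gal(K/C) → (K' ≃+* K'))

theorem minpoly_mem_lifts_of_forall_fixed
    (hρ : ∀ g x, ρ g (algebraMap K K' x) = algebraMap K K' (g x)) {a : K'} (ha : IsIntegral K a)
    (hfix : ∀ g, ρ g a = a) : minpoly K a ∈ lifts (algebraMap C K) := by
  refine (lifts_iff_coeff_lifts _).mpr fun n ↦
    (InfiniteGalois.mem_range_algebraMap_iff_fixed _).mpr fun g ↦ ?_
  have hg := minpoly_map_eq_of_apply_eq g.toRingEquiv (ρ g) (hρ g) ha (hfix g)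
  simpa using congrArg (coeff · n) hg

theorem mem_range_algebraMap_of_forall_fixed [Algebra C K'] [IsScalarTower C K K']
    (hρ : ∀ g x, ρ g (algebraMap K K' x) = algebraMap K K' (g x))
    {a : K'} (haK : a ∈ (algebraMap K K').range)
    (hfix : ∀ g, ρ g a = a) : a ∈ Set.range (algebraMap C K') := by
  obtain ⟨b, rfl⟩ := haK
  have hb : ∀ g : Gal(K/C), g b = b := fun g ↦
    (algebraMap K K').injective ((hρ g b).symm.trans (hfix g))
  obtain ⟨c, rfl⟩ := (InfiniteGalois.mem_range_algebraMap_iff_fixed b).mpr hb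
  exact ⟨c, IsScalarTower.algebraMap_apply C K K' c⟩

end Equivariant

theorem KStronglyPAC_is_G_closed_general
    (C K : Type*) [Field C] [Field K] [Algebra C K] [IsGalois C K]
    (hpac : KStronglyPAC C K) :
    (∀ f : Polynomial C, Irreducible (f.map (algebraMap C K)) → f.natDegree = 1) ∧
      (∀ (K' : Type*) [Field K'] [Algebra C K'] [Algebra K K'] [IsScalarTower C K K']
          [Algebra.IsAlgebraic K K']
          (ρ : (K ≃ₐ[C] K) →* (K' ≃+* K')),
        (∀ (g : K ≃ₐ[C] K) (x : K), ρ g (algebraMap K K' x) = algebraMap K K' (g x)) →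
        ∀ a : K', (∀ g : K ≃ₐ[C] K, ρ g a = a) →
          a ∉ Set.range (algebraMap C K') →
          (∃ f : Polynomial C, f.map (algebraMap C K) = minpoly K a) ∧
            Irreducible (minpoly K a) ∧ 1 < (minpoly K a).natDegree) := by
  refine ⟨fun f hf ↦ hpac.natDegree_eq_one hf, ?_⟩
  intro K' _ _ _ _ _ ρ hρ a hfix hnot
  have ha : IsIntegral K a := Algebra.IsIntegral.isIntegral a
  refine ⟨(mem_lifts _).mp (minpoly_mem_lifts_of_forall_fixed ρ hρ ha hfix),
    minpoly.irreducible ha, ?_⟩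
  refine (minpoly.two_le_natDegree_iff ha).mpr fun haK ↦ hnot ?_
  exact mem_range_algebraMap_of_forall_fixed ρ hρ haK hfix

/-- Let C be perfect, C ⊆ K finite Galois with group G = Gal(K/C), and
C K-strongly PAC. Then every f ∈ C[X] irreducible over K has degree 1; equivalently
there is no nontrivial algebraic G-equivariant extension of K: if K ⊂ K' is algebraic
with a G-action extending that on K and a ∈ (K')^G \ C, then the minimal polynomial
of a over K lies in C[X], is irreducible over K, and has degree > 1. -/
theorem KStronglyPAC_is_G_closed
    (C K : Type*) [Field C] [Field K] [Algebra C K] [PerfectField C]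
    [FiniteDimensional C K] [IsGalois C K]
    (hpac : KStronglyPAC C K) :
    (∀ f : Polynomial C, Irreducible (f.map (algebraMap C K)) → f.natDegree = 1) ∧
      (∀ (K' : Type*) [Field K'] [Algebra C K'] [Algebra K K'] [IsScalarTower C K K']
          [Algebra.IsAlgebraic K K']
          (ρ : (K ≃ₐ[C] K) →* (K' ≃+* K')),
        (∀ (g : K ≃ₐ[C] K) (x : K), ρ g (algebraMap K K' x) = algebraMap K K' (g x)) →
        ∀ a : K', (∀ g : K ≃ₐ[C] K, ρ g a = a) →
          a ∉ Set.range (algebraMap C K') →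
          (∃ f : Polynomial C, f.map (algebraMap C K) = minpoly K a) ∧
            Irreducible (minpoly K a) ∧ 1 < (minpoly K a).natDegree) :=
  KStronglyPAC_is_G_closed_general C K hpac
end

section
/- Let F be a field and σ an automorphism of F of finite order n with fixed field E = F^σ. If [F : E] = n, then for any field extension E ⊆ E' linearly disjoint from F over E, σ extends to an automorphism of the compositum (realized as (F ⊗_E E')) of order n with fixed field E'. -/
open scoped TensorProduct

/-- Let F be a field, σ an automorphism of F of finite order n with
fixed field E and [F : E] = n. For any field extension E ⊆ E' linearly disjoint from
F over E (so that F ⊗_E E' is a field), σ extends to an automorphism of the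
compositum F ⊗_E E' of order n with fixed field E'. -/
theorem extend_automorphism_to_compositum
    (E F E' : Type*) [Field E] [Field F] [Field E']
    [Algebra E F] [Algebra E E']
    (n : ℕ) (σ : F ≃ₐ[E] F)
    (horder : orderOf σ = n)
    (hfixed : ∀ x : F, σ x = x ↔ x ∈ (algebraMap E F).range)
    (hdeg : Module.finrank E F = n)
    (hdisjoint : IsField (F ⊗[E] E')) :
    ∃ τ : (F ⊗[E] E') ≃+* (F ⊗[E] E'),
      (∀ (x : F) (y : E'), τ (x ⊗ₜ[E] y) = σ x ⊗ₜ[E] y) ∧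
      orderOf τ = n ∧
      ∀ z : F ⊗[E] E', τ z = z ↔
        z ∈ (Algebra.TensorProduct.includeRight : E' →ₐ[E] F ⊗[E] E').range := by
  classical
  have hnt : Nontrivial (F ⊗[E] E') := ⟨hdisjoint.exists_pair_ne⟩
  set T : (F ≃ₐ[E] F) → ((F ⊗[E] E') ≃+* (F ⊗[E] E')) :=
    fun s => (Algebra.TensorProduct.congr s (AlgEquiv.refl : E' ≃ₐ[E] E')).toRingEquiv with hT
  have hTapp : ∀ (s : F ≃ₐ[E] F) (x : F) (y : E'), T s (x ⊗ₜ[E] y) = s x ⊗ₜ[E] y := by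
    intro s x y
    simp [hT]
  refine ⟨T σ, fun x y => hTapp σ x y, ?_, ?_⟩
  · -- order
    have hinj : Function.Injective
        (Algebra.TensorProduct.includeLeft : F →ₐ[E] F ⊗[E] E') :=
      (Algebra.TensorProduct.includeLeft : F →ₐ[E] F ⊗[E] E').toRingHom.injective
    have hpow : ∀ (k : ℕ), (T σ) ^ k = T (σ ^ k) := by
      intro k
      induction k with
      | zero =>
        ext z
        induction z with
        | zero => simp
        | tmul x y => rw [pow_zero, pow_zero]; rfl
        | add a b ha hb => simp only [map_add, ha, hb]
      | succ k ih =>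
        ext z
        rw [pow_succ, pow_succ]
        induction z with
        | zero => simp
        | tmul x y =>
          rw [ih]
          rw [show ((T (σ ^ k) * T σ) (x ⊗ₜ[E] y)) = T (σ ^ k) (T σ (x ⊗ₜ[E] y)) from rfl,
            hTapp, hTapp]
          rfl
        | add a b ha hb => simp only [map_add, ha, hb]
    rw [← horder]
    rw [orderOf_eq_orderOf_iff]
    intro k
    rw [hpow]
    constructor
    · intro h
      ext x
      have := DFunLike.congr_fun h ((x : F) ⊗ₜ[E] (1 : E'))
      rw [hTapp] at this
      have : (Algebra.TensorProduct.includeLeft : F →ₐ[E] F ⊗[E] E') ((σ ^ k) x)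
          = (Algebra.TensorProduct.includeLeft : F →ₐ[E] F ⊗[E] E') x := this
      simpa using hinj this
    · intro h
      ext z
      induction z with
      | zero => simp
      | tmul x y => rw [hTapp, h]; rfl
      | add a b ha hb => simp only [map_add, ha, hb]
  · -- fixed points
    intro z
    set f : F →ₗ[E] F := σ.toLinearMap - LinearMap.id with hf
    set g : E →ₗ[E] F := Algebra.linearMap E F with hg
    have hexact : Function.Exact g f := by
      rw [LinearMap.exact_iff]
      ext x
      simp only [LinearMap.mem_ker, hf, LinearMap.sub_apply, AlgEquiv.toLinearMap_apply,
        LinearMap.id_apply, sub_eq_zero, LinearMap.mem_range]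
      rw [hfixed]
      constructor
      · rintro ⟨e, he⟩; exact ⟨e, he⟩
      · rintro ⟨e, he⟩; exact ⟨e, he⟩
    have hexact' : Function.Exact (g.rTensor E') (f.rTensor E') :=
      Module.Flat.rTensor_exact E' hexact
    have hfr : ∀ w : F ⊗[E] E', f.rTensor E' w = T σ w - w := by
      intro w
      induction w with
      | zero => simp
      | tmul x y =>
        simp [hf, LinearMap.rTensor_sub, hTapp, TensorProduct.sub_tmul]
      | add a b ha hb =>
        simp only [map_add, ha, hb]
        abel
    have hrange : Set.range (g.rTensor E') =
        ((Algebra.TensorProduct.includeRight : E' →ₐ[E] F ⊗[E] E').range : Set (F ⊗[E] E')) := by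
      ext w
      constructor
      · rintro ⟨v, rfl⟩
        induction v with
        | zero => exact ⟨0, by simp⟩
        | tmul e c =>
          refine ⟨e • c, ?_⟩
          show (1 : F) ⊗ₜ[E] (e • c) = (LinearMap.rTensor E' g) (e ⊗ₜ[E] c)
          simp only [hg, LinearMap.rTensor_tmul, Algebra.linearMap_apply]
          rw [Algebra.algebraMap_eq_smul_one, TensorProduct.smul_tmul]
        | add a b ha hb =>
          simp only [SetLike.mem_coe] at ha hb ⊢
          rw [map_add]
          exact Subalgebra.add_mem _ ha hb
      · rintro ⟨y, rfl⟩
        exact ⟨(1 : E) ⊗ₜ[E] y, by simp [hg]⟩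
    have := hexact' z
    rw [hfr, sub_eq_zero, hrange] at this
    simpa using this
end

section
/- Let K be a separably closed field admitting a nontrivial automorphism of finite order with fixed field F such that [K : F] is finite and > 1. Then char(K) = 0, F is real closed, K = F(i) with i² = -1, and [K : F] = 2. -/
/-- A field F is real closed: -1 is not a square, every element or its negative is a
square, and every odd-degree polynomial has a root. -/
def IsRealClosedField (F : Type*) [Field F] : Prop :=
  (¬ IsSquare (-1 : F)) ∧ (∀ x : F, IsSquare x ∨ IsSquare (-x)) ∧
    ∀ f : Polynomial F, Odd f.natDegree → ∃ x : F, f.eval x = 0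

/-!
Let `τ` be an automorphism of prime order `q` of a separably closed field `K`. Hilbert's
Theorem 90 for the cyclic group generated by `τ` rules out `q = char K` (Artin–Schreier theory:
`x ↦ x ^ p - x` is surjective on `K`) and odd `q ≠ char K` (Kummer theory: `x ↦ x ^ q` is
surjective on `K`, and `τ` fixes the `q`-th roots of unity). Nor can `τ` have order `4`: then
`τ ^ 2` negates a square root `i` of `-1`, whereas `τ` maps `i` to `±i`. Hence `σ` has order `2`
and `K = F(i)` with `σ i = -i`. The properties of `F` follow: the square roots `±i` of `-1` are
not in `F`; a square root of `x ∈ F` is fixed or negated by `σ`, so `x` or `-x` is a square in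
`F`; irreducible polynomials over `F` have degree at most `[K : F] = 2`; and a norm argument
excludes positive characteristic.
-/

open Finset Polynomial

@[to_additive]
theorem Finset.prod_range_succ_eq_of_eq {M : Type*} [CommMonoid M] {n : ℕ} {f : ℕ → M}
    (h : f n = f 0) : ∏ k ∈ range n, f (k + 1) = ∏ k ∈ range n, f k := by
  cases n with
  | zero => simp
  | succ m => rw [prod_range_succ, h, prod_range_succ']

theorem Nat.eq_two_of_forall_prime_dvd_eq_two {n : ℕ} (hn : n ≠ 1)
    (h : ∀ q, q.Prime → q ∣ n → q = 2) (h4 : ¬ 4 ∣ n) : n = 2 := by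
  obtain ⟨m, rfl⟩ : 2 ∣ n := by
    obtain ⟨q, hq, hqn⟩ := Nat.exists_prime_and_dvd hn
    exact h q hq hqn ▸ hqn
  by_contra hm
  obtain ⟨r, hr, hrm⟩ := Nat.exists_prime_and_dvd (show m ≠ 1 by rintro rfl; exact hm rfl)
  obtain rfl := h r hr (dvd_mul_of_dvd_right hrm 2)
  exact h4 (Nat.mul_dvd_mul_left 2 hrm)

theorem Polynomial.exists_irreducible_odd_natDegree_dvd {F : Type*} [Field F] {f : F[X]}
    (hf : Odd f.natDegree) : ∃ g : F[X], Irreducible g ∧ Odd g.natDegree ∧ g ∣ f := by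
  induction f using WfDvdMonoid.induction_on_irreducible with
  | zero => simp at hf
  | unit u hu => simp [natDegree_eq_zero_of_isUnit hu] at hf
  | mul a p ha hp ih =>
    by_cases hpo : Odd p.natDegree
    · exact ⟨p, hp, hpo, dvd_mul_right p a⟩
    · rw [natDegree_mul hp.ne_zero ha, Nat.odd_add'] at hf
      obtain ⟨g, hg, hgo, hga⟩ := ih (by grind)
      exact ⟨g, hg, hgo, hga.mul_left p⟩

theorem exists_eval_eq_zero_of_odd_natDegree {F L : Type*} [Field F] [Field L] [Algebra F L]
    [IsAlgClosed L] [FiniteDimensional F L] (hL : Module.finrank F L ≤ 2) {f : F[X]}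
    (hf : Odd f.natDegree) : ∃ x : F, f.eval x = 0 := by
  obtain ⟨g, hg, hgo, hgf⟩ := f.exists_irreducible_odd_natDegree_dvd hf
  obtain ⟨α, hα⟩ := IsAlgClosed.exists_aeval_eq_zero L g (degree_pos_of_irreducible hg).ne'
  have hdeg : g.natDegree ≤ 2 := calc
    g.natDegree = (minpoly F α).natDegree := by
      rw [← minpoly.eq_of_irreducible hg hα,
        natDegree_mul_C (inv_ne_zero (leadingCoeff_ne_zero.mpr hg.ne_zero))]
    _ ≤ 2 := (minpoly.natDegree_le α).trans hL
  obtain ⟨x, hx⟩ := exists_root_of_degree_eq_one (p := g) <| by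
    rw [degree_eq_natDegree hg.ne_zero]
    norm_cast
    grind
  exact ⟨x, eval_eq_zero_of_dvd_of_eval_eq_zero hgf hx⟩

theorem finrank_le_two_of_forall_eq_add_mul {F K : Type*} [Field F] [Field K] [Algebra F K]
    {i : K} (h : ∀ x : K, ∃ a b : F, x = algebraMap F K a + algebraMap F K b * i) :
    Module.finrank F K ≤ 2 := by
  let f := (LinearMap.toSpanSingleton F K 1).coprod (LinearMap.toSpanSingleton F K i)
  have hf : LinearMap.range f = ⊤ := LinearMap.range_eq_top.mpr fun x ↦ by
    obtain ⟨a, b, rfl⟩ := h x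
    exact ⟨(a, b), by simp [f, Algebra.smul_def]⟩
  have := f.finrank_range_le
  rwa [hf, finrank_top, Module.finrank_prod, Module.finrank_self] at this

theorem RingHom.apply_eq_self_of_pow_char_eq_self {K : Type*} [Field K] (p : ℕ) [Fact p.Prime]
    [CharP K p] (f : K →+* K) {x : K} (hx : x ^ p = x) : f x = x := by
  have hsplit : (X ^ p - X : (ZMod p)[X]).Splits := by
    simpa [ZMod.card] using FiniteField.splits_X_pow_card_sub_X p (K := ZMod p)
  have hroot : ((X ^ p - X : (ZMod p)[X]).map (ZMod.castHom (dvd_refl p) K)).IsRoot x := by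
    simp [hx]
  obtain ⟨a, rfl⟩ := hsplit.mem_range_of_isRoot
    (FiniteField.X_pow_card_sub_X_ne_zero _ (Fact.out : p.Prime).one_lt) hroot
  exact RingHom.congr_fun (RingHom.ext_zmod (f.comp _) _) a

theorem ne_neg_of_sq_eq_neg_one {K : Type*} [Field K] (h2 : (2 : K) ≠ 0) {i : K}
    (hi : i ^ 2 = -1) : i ≠ -i := by
  intro h
  have hi0 : i = 0 := (mul_eq_zero.mp (by linear_combination h : (2 : K) * i = 0)).resolve_left h2
  simp [hi0] at hi

namespace RingEquiv

variable {K : Type*} [Field K] (τ : K ≃+* K)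

theorem pow_succ_apply (k : ℕ) (x : K) : (τ ^ (k + 1)) x = τ ((τ ^ k) x) := by
  rw [pow_succ', RingAut.mul_apply]

theorem pow_orderOf_apply (x : K) : (τ ^ orderOf τ) x = x := by
  rw [pow_orderOf_eq_one]; rfl

theorem involutive_of_orderOf_eq_two (hτ : orderOf τ = 2) : Function.Involutive τ := fun x ↦ by
  rw [← RingAut.mul_apply, ← sq, ← hτ, pow_orderOf_apply]

theorem pow_apply_of_apply_eq_mul {c x : K} (hc : τ c = c) (hx : τ x = c * x) (k : ℕ) :
    (τ ^ k) x = c ^ k * x := by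
  induction k with
  | zero => simp
  | succ k ih => rw [pow_succ_apply, ih, map_mul, map_pow, hc, hx, pow_succ]; ring

theorem pow_apply_of_apply_eq {x : K} (hx : τ x = x) (k : ℕ) : (τ ^ k) x = x := by
  simpa using τ.pow_apply_of_apply_eq_mul (map_one τ) (by rw [hx, one_mul]) k

/-- The trace along the cyclic group generated by `τ`: for `τ` of finite order this is the
Galois trace from `K` down to the fixed field of `τ`. -/
noncomputable def cyclicTrace : K →+ K where
  toFun x := ∑ k ∈ range (orderOf τ), (τ ^ k) x
  map_zero' := by simp only [map_zero, sum_const_zero]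
  map_add' x y := by simp only [map_add, sum_add_distrib]

noncomputable def cyclicNorm : K →* K where
  toFun x := ∏ k ∈ range (orderOf τ), (τ ^ k) x
  map_one' := by simp only [map_one, prod_const_one]
  map_mul' x y := by simp only [map_mul, prod_mul_distrib]

theorem cyclicTrace_apply (x : K) : τ.cyclicTrace x = ∑ k ∈ range (orderOf τ), (τ ^ k) x := rfl

theorem cyclicNorm_apply (x : K) : τ.cyclicNorm x = ∏ k ∈ range (orderOf τ), (τ ^ k) x := rfl

theorem map_cyclicTrace (x : K) : τ (τ.cyclicTrace x) = τ.cyclicTrace x := by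
  simp only [cyclicTrace_apply, map_sum, ← pow_succ_apply]
  exact sum_range_succ_eq_of_eq (f := fun k ↦ (τ ^ k) x) (τ.pow_orderOf_apply x)

theorem cyclicTrace_map (x : K) : τ.cyclicTrace (τ x) = τ.cyclicTrace x := by
  simp only [cyclicTrace_apply, ← RingAut.mul_apply, ← pow_succ]
  exact sum_range_succ_eq_of_eq (f := fun k ↦ (τ ^ k) x) (τ.pow_orderOf_apply x)

theorem map_cyclicNorm (x : K) : τ (τ.cyclicNorm x) = τ.cyclicNorm x := by
  simp only [cyclicNorm_apply, map_prod, ← pow_succ_apply]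
  exact prod_range_succ_eq_of_eq (f := fun k ↦ (τ ^ k) x) (τ.pow_orderOf_apply x)

theorem cyclicTrace_of_apply_eq {x : K} (hx : τ x = x) : τ.cyclicTrace x = orderOf τ • x := by
  simp [cyclicTrace_apply, τ.pow_apply_of_apply_eq hx]

theorem cyclicNorm_of_apply_eq {x : K} (hx : τ x = x) : τ.cyclicNorm x = x ^ orderOf τ := by
  simp [cyclicNorm_apply, τ.pow_apply_of_apply_eq hx]

theorem cyclicTrace_pow_char (p : ℕ) [Fact p.Prime] [CharP K p] (x : K) :
    τ.cyclicTrace (x ^ p) = τ.cyclicTrace x ^ p := by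
  simp only [cyclicTrace_apply, map_pow, sum_pow_char]

/-- Dedekind's independence of the characters `τ ^ k`, `k < orderOf τ`. -/
theorem exists_sum_mul_pow_apply_ne_zero {y : ℕ → K} {k₀ : ℕ} (hk₀ : k₀ < orderOf τ)
    (hy : y k₀ ≠ 0) : ∃ c : K, ∑ k ∈ range (orderOf τ), y k * (τ ^ k) c ≠ 0 := by
  by_contra! h
  have hinj : Function.Injective fun k : Fin (orderOf τ) ↦ ((τ ^ (k : ℕ) : K ≃+* K) : K →* K) :=
    fun j l hjl ↦ Fin.ext <| pow_injOn_Iio_orderOf j.2 l.2 <|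
      RingEquiv.ext fun x ↦ DFunLike.congr_fun hjl x
  have := Fintype.linearIndependent_iff.mp ((linearIndependent_monoidHom K K).comp _ hinj)
    (fun k ↦ y k) (funext fun c ↦ ?_) ⟨k₀, hk₀⟩
  · exact hy this
  · simpa only [Finset.sum_apply, Function.comp_apply, Pi.smul_apply, smul_eq_mul, Pi.zero_apply,
      MonoidHom.coe_coe, Fin.sum_univ_eq_sum_range (fun k ↦ y k * (τ ^ k) c)] using h c

theorem exists_cyclicTrace_eq_one (hτ : 0 < orderOf τ) : ∃ z : K, τ.cyclicTrace z = 1 := by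
  obtain ⟨c, hc⟩ := τ.exists_sum_mul_pow_apply_ne_zero (y := fun _ ↦ 1) hτ one_ne_zero
  simp only [one_mul, ← cyclicTrace_apply] at hc
  have hfix : ∀ k, (τ ^ k) (τ.cyclicTrace c)⁻¹ = (τ.cyclicTrace c)⁻¹ := fun k ↦ by
    rw [map_inv₀, τ.pow_apply_of_apply_eq (τ.map_cyclicTrace c)]
  refine ⟨(τ.cyclicTrace c)⁻¹ * c, ?_⟩
  rw [cyclicTrace_apply τ (_ * c)]
  simp only [map_mul, hfix]
  rw [← mul_sum, ← cyclicTrace_apply, inv_mul_cancel₀ hc]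

/-- Additive Hilbert 90 for the cyclic group generated by `τ`. -/
theorem exists_eq_sub_apply_of_cyclicTrace_eq_zero (hτ : 0 < orderOf τ) {y : K}
    (hy : τ.cyclicTrace y = 0) : ∃ c : K, y = c - τ c := by
  obtain ⟨z, hz⟩ := τ.exists_cyclicTrace_eq_one hτ
  set S : ℕ → K := fun i ↦ ∑ j ∈ range i, (τ ^ j) y
  have hS : ∀ i, τ (S i) = S (i + 1) - y := fun i ↦ by
    simp only [S, map_sum, ← pow_succ_apply, sum_range_succ' _ i, pow_zero]
    simp
  set c := ∑ i ∈ range (orderOf τ), S i * (τ ^ i) z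
  have hshift : ∑ i ∈ range (orderOf τ), S (i + 1) * (τ ^ (i + 1)) z = c :=
    sum_range_succ_eq_of_eq (f := fun i ↦ S i * (τ ^ i) z)
      (by rw [show S (orderOf τ) = 0 from hy]; simp [S])
  refine ⟨c, ?_⟩
  have : τ c = c - y * τ (τ.cyclicTrace z) := by
    simp only [c, map_sum, map_mul, hS, sub_mul, sum_sub_distrib, ← pow_succ_apply, hshift,
      cyclicTrace_apply, mul_sum]
  rw [this, map_cyclicTrace, hz]
  ring

/-- Hilbert 90 for the cyclic group generated by `τ`. -/
theorem exists_mul_apply_eq_of_cyclicNorm_eq_one (hτ : 0 < orderOf τ) {y : K}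
    (hy : τ.cyclicNorm y = 1) : ∃ b : K, b ≠ 0 ∧ y * τ b = b := by
  set Y : ℕ → K := fun i ↦ ∏ j ∈ range i, (τ ^ j) y
  have hY : ∀ i, y * τ (Y i) = Y (i + 1) := fun i ↦ by
    simp only [Y, map_prod, ← pow_succ_apply, prod_range_succ' _ i, pow_zero]
    simp [mul_comm]
  obtain ⟨c, hc⟩ := τ.exists_sum_mul_pow_apply_ne_zero (y := Y) hτ (by simp [Y])
  refine ⟨_, hc, ?_⟩
  simp only [map_sum, map_mul, mul_sum, ← mul_assoc, hY, ← pow_succ_apply]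
  exact sum_range_succ_eq_of_eq (f := fun i ↦ Y i * (τ ^ i) c)
    (by rw [show Y (orderOf τ) = 1 from hy, pow_orderOf_apply]; simp [Y])

theorem apply_eq_self_of_isPrimitiveRoot {q : ℕ} (hq : q.Prime) (hτ : orderOf τ = q) {ζ : K}
    (hζ : IsPrimitiveRoot ζ q) : τ ζ = ζ := by
  have : Fact q.Prime := ⟨hq⟩
  have : NeZero q := ⟨hq.ne_zero⟩
  obtain ⟨i, -, hi⟩ :=
    hζ.eq_pow_of_pow_eq_one (ξ := τ ζ) (by rw [← map_pow, hζ.pow_eq_one, map_one])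
  have hpow : ∀ k, (τ ^ k) ζ = ζ ^ i ^ k := fun k ↦ by
    induction k with
    | zero => simp
    | succ k ih => rw [pow_succ_apply, ih, map_pow, ← hi, ← pow_mul, pow_succ, mul_comm]
  have hfermat : i ^ q ≡ i [MOD orderOf ζ] := by
    rw [← hζ.eq_orderOf, ← ZMod.natCast_eq_natCast_iff]
    push_cast
    exact ZMod.pow_card _
  calc τ ζ = ζ ^ i := hi.symm
    _ = ζ ^ i ^ q := by rw [← pow_mod_orderOf, ← hfermat, pow_mod_orderOf]
    _ = ζ := by rw [← hpow, ← hτ, pow_orderOf_apply]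

end RingEquiv

namespace IsSepClosed

variable {K : Type*} [Field K] [IsSepClosed K]

open RingEquiv

theorem natCast_ne_zero_of_orderOf_eq {p : ℕ} (hp : p.Prime) (τ : K ≃+* K)
    (hτ : orderOf τ = p) : (p : K) ≠ 0 := by
  intro hpK
  have : Fact p.Prime := ⟨hp⟩
  have : CharP K p := (CharP.charP_iff_prime_eq_zero hp).mpr hpK
  obtain ⟨d, hd⟩ := τ.exists_cyclicTrace_eq_one (hτ ▸ hp.pos)
  obtain ⟨c, hc⟩ := τ.exists_eq_sub_apply_of_cyclicTrace_eq_zero (hτ ▸ hp.pos)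
    (y := d ^ p - d) (by rw [map_sub, cyclicTrace_pow_char, hd, one_pow, sub_self])
  obtain ⟨θ, hθ⟩ : ∃ θ : K, θ ^ p - θ = c := by
    obtain ⟨θ, hθ⟩ := exists_root_C_mul_X_pow_add_C_mul_X_add_C' p p 1 (-1) (-c) dvd_rfl
      hp.two_le (by simp)
    exact ⟨θ, by linear_combination hθ⟩
  -- `θ - τ θ - d` is a root of `X ^ p - X`, hence lies in the prime field
  have hfix : τ (θ - τ θ - d) = θ - τ θ - d := by
    refine (τ : K →+* K).apply_eq_self_of_pow_char_eq_self p ?_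
    have hτθ : (τ θ) ^ p - τ θ = τ c := by rw [← map_pow, ← map_sub, hθ]
    rw [sub_pow_char, sub_pow_char]
    linear_combination hθ - hτθ - hc
  have htr := congrArg τ.cyclicTrace (show θ - τ θ = d + (θ - τ θ - d) by ring)
  rw [map_sub, cyclicTrace_map, sub_self, map_add, hd, cyclicTrace_of_apply_eq _ hfix, hτ,
    nsmul_eq_mul, hpK, zero_mul, add_zero] at htr
  exact zero_ne_one htr

theorem exists_isPrimitiveRoot (n : ℕ) [NeZero (n : K)] : ∃ ζ : K, IsPrimitiveRoot ζ n := by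
  have hsep : (cyclotomic n K).Separable :=
    (X_pow_sub_one_separable_iff.mpr (NeZero.ne _)).of_dvd (cyclotomic.dvd_X_pow_sub_one n K)
  obtain ⟨ζ, hζ⟩ := exists_root _
    (degree_cyclotomic_pos n K (NeZero.of_neZero_natCast K).pos).ne' hsep
  exact ⟨ζ, isRoot_cyclotomic_iff.mp hζ⟩

theorem orderOf_ne_of_prime_ne_two {q : ℕ} (hq : q.Prime) (hq2 : q ≠ 2) (τ : K ≃+* K) :
    orderOf τ ≠ q := by
  intro hτ
  have : NeZero q := ⟨hq.ne_zero⟩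
  have : NeZero (q : K) := ⟨natCast_ne_zero_of_orderOf_eq hq τ hτ⟩
  obtain ⟨ξ, hξ⟩ := exists_isPrimitiveRoot (K := K) q
  have hξτ : τ ξ = ξ := τ.apply_eq_self_of_isPrimitiveRoot hq hτ hξ
  obtain ⟨b, hb0, hb⟩ := τ.exists_mul_apply_eq_of_cyclicNorm_eq_one (hτ ▸ hq.pos) (y := ξ⁻¹)
    (by rw [cyclicNorm_of_apply_eq _ (by rw [map_inv₀, hξτ]), hτ, inv_pow, hξ.pow_eq_one, inv_one])
  have hτb : τ b = ξ * b := by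
    rw [← mul_inv_cancel_left₀ (hξ.ne_zero hq.ne_zero) (τ b), hb]
  -- `q` divides `∑_{k < q} k = q (q - 1) / 2` because `q` is odd
  have hsum : ξ ^ ∑ k ∈ range q, k = 1 := (hξ.pow_eq_one_iff_dvd _).mpr <|
    ((Nat.coprime_primes hq Nat.prime_two).mpr hq2).dvd_of_dvd_mul_right
      ⟨q - 1, sum_range_id_mul_two q⟩
  have hNb : τ.cyclicNorm b = b ^ q := by
    rw [cyclicNorm_apply, hτ]
    simp only [τ.pow_apply_of_apply_eq_mul hξτ hτb, prod_mul_distrib, prod_const, card_range]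
    rw [prod_pow_eq_pow_sum, hsum, one_mul]
  -- `N β` and `b` are `q`-th roots of `N b = b ^ q`, so they differ by a power of `ξ`, which would
  -- make `b` fixed by `τ`
  obtain ⟨β, hβ⟩ := exists_pow_nat_eq b q
  have hNβ : τ.cyclicNorm β ^ q = b ^ q := by rw [← map_pow, hβ, hNb]
  have hNβ0 : τ.cyclicNorm β ≠ 0 := by
    intro h
    rw [h, zero_pow hq.ne_zero, eq_comm, pow_eq_zero_iff hq.ne_zero] at hNβ
    exact hb0 hNβ
  obtain ⟨j, -, hj⟩ := hξ.eq_pow_of_pow_eq_one (ξ := b / τ.cyclicNorm β)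
    (by rw [div_pow, hNβ, div_self (pow_ne_zero _ hb0)])
  have hfix : τ (b / τ.cyclicNorm β) = b / τ.cyclicNorm β := by rw [← hj, map_pow, hξτ]
  rw [map_div₀, map_cyclicNorm, hτb, div_left_inj' hNβ0, mul_eq_right₀ hb0] at hfix
  exact hξ.ne_one hq.one_lt hfix

theorem exists_sq_eq_neg_one_and_apply_eq_neg (h2 : (2 : K) ≠ 0) (τ : K ≃+* K)
    (hτ : orderOf τ = 2) : ∃ i : K, i ^ 2 = -1 ∧ τ i = -i := by
  have hinv := τ.involutive_of_orderOf_eq_two hτ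
  obtain ⟨x, hx⟩ := DFunLike.ne_iff.mp (show τ ≠ 1 by rintro rfl; simp at hτ)
  have : NeZero ((2 : ℕ) : K) := ⟨by exact_mod_cast h2⟩
  obtain ⟨β, hβ⟩ := exists_pow_nat_eq (x - τ x) 2
  have hβ0 : β ≠ 0 := by
    rintro rfl
    exact hx (sub_eq_zero.mp (by simpa using hβ.symm)).symm
  have hτβ : τ β ^ 2 = -β ^ 2 := by rw [← map_pow, hβ, map_sub, hinv, neg_sub]
  have hτβ0 : τ β ≠ 0 := (map_ne_zero τ).mpr hβ0
  refine ⟨τ β / β, ?_, ?_⟩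
  · rw [div_pow, hτβ, neg_div, div_self (pow_ne_zero 2 hβ0)]
  · rw [map_div₀, hinv]
    field_simp
    linear_combination hτβ

theorem orderOf_ne_four (τ : K ≃+* K) : orderOf τ ≠ 4 := by
  intro hτ
  have hτ2 : orderOf (τ ^ 2) = 2 := by
    simpa [hτ] using orderOf_pow_orderOf_div (x := τ) (n := 2) (by omega) (by rw [hτ]; norm_num)
  have h2 : (2 : K) ≠ 0 := by exact_mod_cast natCast_ne_zero_of_orderOf_eq Nat.prime_two _ hτ2
  obtain ⟨i, hi, hτ2i⟩ := exists_sq_eq_neg_one_and_apply_eq_neg h2 _ hτ2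
  have hτi : τ i = i ∨ τ i = -i :=
    sq_eq_sq_iff_eq_or_eq_neg.mp (by rw [← map_pow, hi, map_neg, map_one])
  refine ne_neg_of_sq_eq_neg_one h2 hi ?_
  rw [← hτ2i]
  rcases hτi with h | h <;> simp [sq, h]

end IsSepClosed

section Involution

variable {K : Type*} [Field K] {σ : K ≃+* K} {i : K}

theorem sq_ne_neg_one_of_apply_eq_self (h2 : (2 : K) ≠ 0) (hi : i ^ 2 = -1) (hσi : σ i = -i)
    {u : K} (hu : σ u = u) : u ^ 2 ≠ -1 := by
  intro hu2
  apply ne_neg_of_sq_eq_neg_one h2 hi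
  rcases sq_eq_sq_iff_eq_or_eq_neg.mp (hu2.trans hi.symm) with rfl | rfl
  · exact hu.symm.trans hσi
  · simpa [hσi] using hu

theorem exists_eq_add_mul_of_involutive {F : Subfield K} (hF : ∀ x, x ∈ F ↔ σ x = x)
    (hσ : Function.Involutive σ) (h2 : (2 : K) ≠ 0) (hi : i ^ 2 = -1) (hσi : σ i = -i) (x : K) :
    ∃ a b : F, x = a + b * i := by
  have hi0 : i ≠ 0 := by rintro rfl; simp at hi
  refine ⟨⟨(x + σ x) / 2, (hF _).mpr ?_⟩, ⟨(x - σ x) / (2 * i), (hF _).mpr ?_⟩, ?_⟩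
  · rw [map_div₀, map_add, hσ x, map_ofNat, add_comm]
  · rw [map_div₀, map_sub, hσ x, map_mul, map_ofNat, hσi, mul_neg, div_neg, ← neg_div, neg_sub]
  · field_simp
    ring

theorem isSquare_or_isSquare_neg_of_apply_eq_neg [IsSepClosed K] {F : Subfield K}
    (hF : ∀ x, x ∈ F ↔ σ x = x) (h2 : (2 : K) ≠ 0) (hi : i ^ 2 = -1) (hσi : σ i = -i) (x : F) :
    IsSquare x ∨ IsSquare (-x) := by
  have : NeZero ((2 : ℕ) : K) := ⟨by exact_mod_cast h2⟩
  obtain ⟨y, hy⟩ := IsSepClosed.exists_pow_nat_eq (x : K) 2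
  have hσy : σ y ^ 2 = y ^ 2 := by rw [← map_pow, hy, (hF x).mp x.2]
  rcases sq_eq_sq_iff_eq_or_eq_neg.mp hσy with h | h
  · exact .inl ⟨⟨y, (hF y).mpr h⟩, Subtype.ext (by simp [← hy, sq])⟩
  · refine .inr ⟨⟨i * y, (hF _).mpr (by rw [map_mul, hσi, h, neg_mul_neg])⟩, Subtype.ext ?_⟩
    push_cast
    linear_combination -y ^ 2 * hi + hy

theorem ringChar_eq_zero_of_apply_eq_neg [IsSepClosed K] (hσ : Function.Involutive σ)
    (h2 : (2 : K) ≠ 0) (hi : i ^ 2 = -1) (hσi : σ i = -i) : ringChar K = 0 := by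
  by_contra hp
  have : NeZero (ringChar K) := ⟨hp⟩
  have : NeZero ((2 : ℕ) : K) := ⟨by exact_mod_cast h2⟩
  -- `-1 = a ^ 2 + b ^ 2` in the prime field, so `-1` is the norm `z * σ z` of `z = a + b i`,
  -- and then the norm of a square root of `z` is a `σ`-invariant square root of `-1`
  obtain ⟨a, b, hab⟩ := CharP.sq_add_sq K (ringChar K) (-1)
  obtain ⟨w, hw⟩ := IsSepClosed.exists_pow_nat_eq ((a : K) + b * i) 2
  refine sq_ne_neg_one_of_apply_eq_self h2 hi hσi (u := w * σ w)
    (by rw [map_mul, hσ w, mul_comm]) ?_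
  rw [mul_pow, ← map_pow, hw, map_add, map_mul, map_natCast, map_natCast, hσi]
  push_cast at hab
  linear_combination hab - (b : K) ^ 2 * hi

end Involution

/-- Artin–Schreier: Let K be a separably closed field admitting a
nontrivial automorphism of finite order whose fixed field F satisfies 1 < [K : F] < ∞.
Then char K = 0, F is real closed, K = F(i) with i² = -1, and [K : F] = 2. -/
theorem artin_schreier
    (K : Type*) [Field K] [IsSepClosed K]
    (σ : K ≃+* K) (hσ : σ ≠ RingEquiv.refl K) (hfin : IsOfFinOrder σ)
    (F : Subfield K) (hF : ∀ x : K, x ∈ F ↔ σ x = x)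
    [FiniteDimensional F K] (hdeg : 1 < Module.finrank F K) :
    ringChar K = 0 ∧ IsRealClosedField F ∧
      (∃ i : K, i ^ 2 = -1 ∧ ∀ x : K, ∃ a b : F, x = (a : K) + (b : K) * i) ∧
      Module.finrank F K = 2 := by
  have hn : orderOf σ ≠ 0 := hfin.orderOf_pos.ne'
  have hσ2 : orderOf σ = 2 := by
    refine Nat.eq_two_of_forall_prime_dvd_eq_two (orderOf_eq_one_iff.not.mpr hσ)
      (fun q hq hqn ↦ ?_) fun h4 ↦ ?_
    · by_contra hq2
      exact IsSepClosed.orderOf_ne_of_prime_ne_two hq hq2 _ (orderOf_pow_orderOf_div hn hqn)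
    · exact IsSepClosed.orderOf_ne_four _ (orderOf_pow_orderOf_div hn h4)
  have h2 : (2 : K) ≠ 0 := by
    exact_mod_cast IsSepClosed.natCast_ne_zero_of_orderOf_eq Nat.prime_two σ hσ2
  have hinv := σ.involutive_of_orderOf_eq_two hσ2
  obtain ⟨i, hi, hσi⟩ := IsSepClosed.exists_sq_eq_neg_one_and_apply_eq_neg h2 σ hσ2
  have hspan := exists_eq_add_mul_of_involutive hF hinv h2 hi hσi
  have hrank : Module.finrank F K = 2 := (finrank_le_two_of_forall_eq_add_mul hspan).antisymm hdeg
  have hchar := ringChar_eq_zero_of_apply_eq_neg hinv h2 hi hσi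
  have : CharZero K := (CharP.ringChar_zero_iff_CharZero K).mp hchar
  refine ⟨hchar, ⟨?_, isSquare_or_isSquare_neg_of_apply_eq_neg hF h2 hi hσi,
    fun f hf ↦ exists_eval_eq_zero_of_odd_natDegree hrank.le hf⟩, ⟨i, hi, hspan⟩, hrank⟩
  rintro ⟨r, hr⟩
  exact sq_ne_neg_one_of_apply_eq_self h2 hi hσi ((hF r).mp r.2)
    (by rw [sq, ← Subfield.coe_mul, ← hr, Subfield.coe_neg, Subfield.coe_one])
end
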